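/- arXiv:1105.1899 — 2 statements merged into one kernel-verified Lean document; each statement's English description precedes it below -/
import Mathlib

section
/- Let K ⊆ S(A) be a compact convex subset of the state space of a finite-dimensional C*-algebra A, and let Q = {λσ : λ ≥ 0, σ ∈ K} be the convex cone generated by K. Then K is a section of S(A) if and only if for all a, b ∈ Q with b ≤ a one has a − b ∈ Q. -/
/-!
Self-adjoint elements of `[K]` lie in the real span of `K`, hence are differences `P - N` of
elements of the cone `Q`. If `Q` is hereditary, a state `x = P - N ∈ [K]` is therefore in `Q`,
i.e. a multiple `t σ` of some `σ ∈ K`, and comparing traces gives `t = 1`. Conversely, if `K` is a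
section and `a, b ∈ Q` with `b ≤ a`, then `a - b` is a positive element of `[K]`; either its trace
vanishes and `a - b = 0`, or dividing by its trace gives an element of `[K] ∩ S(A) = K`.
-/

open scoped BigOperators Pointwise

namespace GenCh

/-- A finite-dimensional C*-algebra `⊕ⱼ B(Hⱼ)`, represented as the algebra of
block-diagonal operators: an element assigns to each block index `i` a matrix
acting on the (finite-dimensional) Hilbert space with orthonormal basis `d i`. -/
abbrev PiMat (ι : Type) (d : ι → Type) : Type := ∀ i, Matrix (d i) (d i) ℂ

variable {ι : Type} [Fintype ι] [DecidableEq ι] {d : ι → Type}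
  [∀ i, Fintype (d i)] [∀ i, DecidableEq (d i)]
variable {κ : Type} [Fintype κ] [DecidableEq κ] {e : κ → Type}
  [∀ j, Fintype (e j)] [∀ j, DecidableEq (e j)]

/-- A positive element of a (finite-dimensional) C*-algebra: `a = b* b`. -/
def IsPosEl {A : Type} [NonUnitalSemiring A] [StarRing A] (a : A) : Prop :=
  ∃ b, a = star b * b

/-- The (un-normalized) trace `Tr` on `⊕ⱼ B(Hⱼ)`. -/
noncomputable def trL : PiMat ι d →ₗ[ℂ] ℂ where
  toFun a := ∑ i, (a i).trace
  map_add' a b := by simp [Matrix.trace_add, Finset.sum_add_distrib]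
  map_smul' c a := by simp [Matrix.trace_smul, Finset.mul_sum, smul_eq_mul]

/-- Complete positivity of a linear map between (finite-dimensional) C*-algebras:
for every `n`, the induced map on `n × n` matrices (i.e. `id_{B(ℂⁿ)} ⊗ Φ`)
preserves positivity. -/
def IsCP {A B : Type} [NonUnitalSemiring A] [StarRing A] [Module ℂ A]
    [NonUnitalSemiring B] [StarRing B] [Module ℂ B] (Φ : A →ₗ[ℂ] B) : Prop :=
  ∀ (n : ℕ) (M : Matrix (Fin n) (Fin n) A), IsPosEl M → IsPosEl (M.map Φ)

/-- Complete positivity of a linear map defined on a linear subspace `J ⊆ A`: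
for every `n`, the entrywise application (i.e. `id_{B(ℂⁿ)} ⊗ Ξ`) maps matrices with
entries in `J` that are positive in `Mₙ(A)` to positive elements of `Mₙ(B)`. -/
def IsCPOn {A B : Type} [NonUnitalSemiring A] [StarRing A] [Module ℂ A]
    [NonUnitalSemiring B] [StarRing B] [Module ℂ B]
    (J : Submodule ℂ A) (Ξ : J →ₗ[ℂ] B) : Prop :=
  ∀ (n : ℕ) (M : Matrix (Fin n) (Fin n) J),
    IsPosEl (M.map (fun x => (x : A))) → IsPosEl (M.map (fun x => Ξ x))

/-- The state space `S(A)`: positive elements of trace one. -/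
def stateSet (ι : Type) [Fintype ι] [DecidableEq ι] (d : ι → Type)
    [∀ i, Fintype (d i)] [∀ i, DecidableEq (d i)] : Set (PiMat ι d) :=
  {a | IsPosEl a ∧ trL a = 1}

/-- `K` is a section of the state space: `K = [K] ∩ S(A)`. -/
def IsSection (K : Set (PiMat ι d)) : Prop :=
  K = (Submodule.span ℂ K : Set (PiMat ι d)) ∩ stateSet ι d

/-- The transpose `a ↦ aᵀ` (blockwise). -/
def pT (a : PiMat ι d) : PiMat ι d := fun i => (a i).transpose

/-- The transpose as a linear map. -/
noncomputable def pTL : PiMat ι d →ₗ[ℂ] PiMat ι d where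
  toFun := pT
  map_add' a b := by funext i; simp [pT]
  map_smul' c a := by funext i; simp [pT]

/-- The Hilbert–Schmidt inner product `⟨a,b⟩ = Tr(a* b)`. -/
noncomputable def hsIP (a b : PiMat ι d) : ℂ := trL (star a * b)

/-- The orthogonal complement `S^⊥` of a subset w.r.t. the Hilbert-Schmidt
inner product, as a (complex-linear) subspace. -/
noncomputable def orthSet (S : Set (PiMat ι d)) : Submodule ℂ (PiMat ι d) where
  carrier := {x | ∀ a ∈ S, trL (star a * x) = 0}
  zero_mem' := by intro a _; simp
  add_mem' := by
    intro x y hx hy a ha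
    rw [mul_add, map_add, hx a ha, hy a ha, add_zero]
  smul_mem' := by
    intro c x hx a ha
    rw [mul_smul_comm, map_smul, hx a ha, smul_zero]

/-- The embedding of `a ⊗ b` into the tensor product algebra
`(⊕ᵢ B(Hᵢ)) ⊗ (⊕ⱼ B(Kⱼ)) = ⊕_{i,j} B(Hᵢ ⊗ Kⱼ)`, realized via Kronecker products. -/
noncomputable def otimes (a : PiMat ι d) (b : PiMat κ e) :
    PiMat (ι × κ) (fun p => d p.1 × e p.2) :=
  fun p => Matrix.kroneckerMap (· * ·) (a p.1) (b p.2)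

/-- The tensor product `V ⊗ W` of two subsets as a subspace of the tensor
product algebra: the span of elementary tensors. -/
noncomputable def tensSub (V : Set (PiMat κ e)) (W : Set (PiMat ι d)) :
    Submodule ℂ (PiMat (κ × ι) (fun p => e p.1 × d p.2)) :=
  Submodule.span ℂ {x | ∃ b ∈ V, ∃ w ∈ W, x = otimes b w}

/-- The Choi matrix `X_Φ ∈ B ⊗ A` of a linear map `Φ : A → B`,
defined blockwise via `X_{Φ_ij} = (Φ_ij ⊗ id)(Ψ_{H_i})`. -/
noncomputable def choi (Φ : PiMat ι d →ₗ[ℂ] PiMat κ e) :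
    PiMat (κ × ι) (fun p => e p.1 × d p.2) :=
  fun p x y => Φ (Pi.single p.2 (Matrix.single x.2 y.2 1)) p.1 x.1 y.1

/-- The partial trace `Tr_B : B ⊗ A → A` over the first (output) factor. -/
noncomputable def ptrFst (X : PiMat (κ × ι) (fun p => e p.1 × d p.2)) : PiMat ι d :=
  fun i a b => ∑ j : κ, ∑ k : e j, X (j, i) (k, a) (k, b)

/-- The map `A → B` associated to a matrix `X ∈ B ⊗ A` via
`T_X(a) = Tr_A[(I_B ⊗ aᵀ) X]`. -/
noncomputable def applyChoi (X : PiMat (κ × ι) (fun p => e p.1 × d p.2)) (a : PiMat ι d) :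
    PiMat κ e :=
  fun j u v => ∑ i : ι, ∑ m : d i, ∑ x : d i, (a i) m x * X (j, i) (u, m) (v, x)

/-- A channel: a completely positive trace-preserving linear map. -/
def IsChannel (Φ : PiMat ι d →ₗ[ℂ] PiMat κ e) : Prop :=
  IsCP Φ ∧ ∀ a, trL (Φ a) = trL a

/-- For a self-adjoint subspace `J`, the subspace `J̃ = [I_A] ∨ (Jᵀ)^⊥` spanned by
`I_A + (Jᵀ)^⊥`. -/
noncomputable def tilde (J : Submodule ℂ (PiMat ι d)) : Submodule ℂ (PiMat ι d) :=
  Submodule.span ℂ {(1 : PiMat ι d)} ⊔ orthSet (pT '' (J : Set (PiMat ι d)))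

end GenCh

namespace GenCh

/-- The convex cone `Q = {λσ : λ ≥ 0, σ ∈ K}` generated by `K`. -/
def coneOf {ι : Type} [Fintype ι] [DecidableEq ι] {d : ι → Type}
    [∀ i, Fintype (d i)] [∀ i, DecidableEq (d i)]
    (K : Set (PiMat ι d)) : Set (PiMat ι d) :=
  {x | ∃ (t : ℝ) (σ : PiMat ι d), 0 ≤ t ∧ σ ∈ K ∧ x = t • σ}

open scoped ComplexOrder Matrix

lemma IsPosEl.isSelfAdjoint {A : Type} [NonUnitalSemiring A] [StarRing A] {a : A}
    (ha : IsPosEl a) : IsSelfAdjoint a := by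
  obtain ⟨b, rfl⟩ := ha
  exact IsSelfAdjoint.star_mul_self b

lemma IsPosEl.real_smul {A : Type} [NonUnitalSemiring A] [StarRing A] [Module ℝ A]
    [StarModule ℝ A] [IsScalarTower ℝ A A] [SMulCommClass ℝ A A] {a : A} (ha : IsPosEl a)
    {t : ℝ} (ht : 0 ≤ t) : IsPosEl (t • a) := by
  obtain ⟨b, rfl⟩ := ha
  refine ⟨Real.sqrt t • b, ?_⟩
  rw [star_smul, smul_mul_smul_comm, star_trivial (Real.sqrt t), Real.mul_self_sqrt ht]

lemma mem_span_real_of_isSelfAdjoint {A : Type} [AddCommGroup A] [Module ℂ A] [StarAddMonoid A]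
    [StarModule ℂ A] [Module ℝ A] [IsScalarTower ℝ ℂ A] {S : Set A}
    (hS : ∀ s ∈ S, IsSelfAdjoint s) {x : A} (hx : x ∈ Submodule.span ℂ S)
    (hsa : IsSelfAdjoint x) : x ∈ Submodule.span ℝ S := by
  have hre : ∀ z ∈ Submodule.span ℂ S, ∀ c : ℂ, c • z + star (c • z) ∈ Submodule.span ℝ S := by
    intro z hz
    induction hz using Submodule.span_induction with
    | mem s hs =>
      intro c
      rw [star_smul, (hS s hs).star_eq, ← add_smul, Complex.star_def, Complex.add_conj]
      have h := Submodule.smul_mem (Submodule.span ℝ S) (2 * c.re) (Submodule.subset_span hs)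
      rwa [← algebraMap_smul ℂ] at h
    | zero => simp
    | add z w _ _ hz hw =>
      intro c
      rw [smul_add, star_add, add_add_add_comm]
      exact add_mem (hz c) (hw c)
    | smul a z _ hz =>
      intro c
      rw [smul_smul]
      exact hz (c * a)
  have h2x := hre x hx 1
  rw [one_smul, hsa.star_eq, ← two_smul ℝ x] at h2x
  simpa using Submodule.smul_mem _ (1 / 2 : ℝ) h2x

section Cone

variable {ι : Type} [Fintype ι] {d : ι → Type} [∀ i, Fintype (d i)]

lemma trL_real_smul (t : ℝ) (a : PiMat ι d) : trL (t • a) = t * trL a := by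
  rw [trL.map_smul_of_tower, Complex.real_smul]

lemma IsPosEl.trL_nonneg {a : PiMat ι d} (ha : IsPosEl a) : 0 ≤ trL a := by
  obtain ⟨b, rfl⟩ := ha
  exact Finset.sum_nonneg fun i _ => (Matrix.posSemidef_conjTranspose_mul_self (b i)).trace_nonneg

lemma IsPosEl.eq_zero_of_trL_eq_zero {a : PiMat ι d} (ha : IsPosEl a) (h : trL a = 0) :
    a = 0 := by
  obtain ⟨b, rfl⟩ := ha
  have hblock : ∀ i, ((b i)ᴴ * b i).trace = 0 := fun i =>
    (Finset.sum_eq_zero_iff_of_nonneg fun i _ =>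
      (Matrix.posSemidef_conjTranspose_mul_self (b i)).trace_nonneg).1 h i (Finset.mem_univ i)
  have hb : b = 0 := funext fun i => Matrix.trace_conjTranspose_mul_self_eq_zero_iff.1 (hblock i)
  simp [hb]

variable [DecidableEq ι] [∀ i, DecidableEq (d i)] {K : Set (PiMat ι d)}

lemma zero_mem_coneOf (hne : K.Nonempty) : 0 ∈ coneOf K :=
  ⟨0, hne.some, le_rfl, hne.some_mem, (zero_smul ℝ _).symm⟩

lemma smul_mem_coneOf {x : PiMat ι d} (hx : x ∈ coneOf K) {t : ℝ} (ht : 0 ≤ t) :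
    t • x ∈ coneOf K := by
  obtain ⟨s, σ, hs, hσ, rfl⟩ := hx
  exact ⟨t * s, σ, mul_nonneg ht hs, hσ, smul_smul t s σ⟩

lemma add_mem_coneOf (hconv : Convex ℝ K) {a b : PiMat ι d} (ha : a ∈ coneOf K)
    (hb : b ∈ coneOf K) : a + b ∈ coneOf K := by
  obtain ⟨t, σ, ht, hσ, rfl⟩ := ha
  obtain ⟨s, τ, hs, hτ, rfl⟩ := hb
  rcases (add_nonneg ht hs).eq_or_lt with h | h
  · obtain ⟨rfl, rfl⟩ : t = 0 ∧ s = 0 := ⟨by linarith, by linarith⟩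
    exact ⟨0, σ, le_rfl, hσ, by simp⟩
  · refine ⟨t + s, (t / (t + s)) • σ + (s / (t + s)) • τ, h.le,
      hconv hσ hτ (div_nonneg ht h.le) (div_nonneg hs h.le) (by field_simp), ?_⟩
    rw [smul_add, smul_smul, smul_smul, mul_div_cancel₀ _ h.ne', mul_div_cancel₀ _ h.ne']

lemma coneOf_subset_span : coneOf K ⊆ Submodule.span ℂ K := by
  rintro _ ⟨t, σ, -, hσ, rfl⟩
  exact Submodule.smul_of_tower_mem _ t (Submodule.subset_span hσ)

lemma span_real_subset_coneOf_sub_coneOf (hconv : Convex ℝ K) (hne : K.Nonempty) :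
    (Submodule.span ℝ K : Set (PiMat ι d)) ⊆ coneOf K - coneOf K := by
  intro x hx
  induction hx using Submodule.span_induction with
  | mem σ hσ => exact ⟨σ, ⟨1, σ, zero_le_one, hσ, (one_smul ℝ σ).symm⟩, 0, zero_mem_coneOf hne,
      sub_zero σ⟩
  | zero => exact ⟨0, zero_mem_coneOf hne, 0, zero_mem_coneOf hne, sub_zero 0⟩
  | add _ _ _ _ hx hy =>
    obtain ⟨P, hP, N, hN, rfl⟩ := hx
    obtain ⟨P', hP', N', hN', rfl⟩ := hy
    exact ⟨P + P', add_mem_coneOf hconv hP hP', N + N', add_mem_coneOf hconv hN hN',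
      (sub_add_sub_comm P N P' N').symm⟩
  | smul t _ _ hx =>
    obtain ⟨P, hP, N, hN, rfl⟩ := hx
    rcases le_total 0 t with ht | ht
    · exact ⟨t • P, smul_mem_coneOf hP ht, t • N, smul_mem_coneOf hN ht, (smul_sub t P N).symm⟩
    · refine ⟨(-t) • N, smul_mem_coneOf hN (neg_nonneg.2 ht), (-t) • P,
        smul_mem_coneOf hP (neg_nonneg.2 ht), ?_⟩
      show (-t) • N - (-t) • P = t • (P - N)
      rw [neg_smul, neg_smul, neg_sub_neg, smul_sub]

lemma coneOf_inter_stateSet_subset (hK : K ⊆ stateSet ι d) : coneOf K ∩ stateSet ι d ⊆ K := by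
  rintro _ ⟨⟨t, σ, -, hσ, rfl⟩, -, htr⟩
  have ht : (t : ℂ) = 1 := by rwa [trL_real_smul, (hK hσ).2, mul_one] at htr
  rwa [Complex.ofReal_eq_one.1 ht, one_smul]

lemma isSection_iff_span_inter_stateSet_subset (hK : K ⊆ stateSet ι d) :
    IsSection K ↔ (Submodule.span ℂ K : Set (PiMat ι d)) ∩ stateSet ι d ⊆ K := by
  rw [IsSection, Set.Subset.antisymm_iff]
  exact and_iff_right fun x hx => ⟨Submodule.subset_span hx, hK hx⟩

lemma nonempty_of_mem_span_inter_stateSet {x : PiMat ι d}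
    (hx : x ∈ (Submodule.span ℂ K : Set (PiMat ι d)) ∩ stateSet ι d) : K.Nonempty := by
  rw [Set.nonempty_iff_ne_empty]
  rintro rfl
  obtain ⟨hx0, -, htr⟩ := hx
  simp_all

lemma mem_coneOf_of_span_inter_stateSet_subset
    (hsec : (Submodule.span ℂ K : Set (PiMat ι d)) ∩ stateSet ι d ⊆ K) (hne : K.Nonempty)
    {x : PiMat ι d} (hx : x ∈ Submodule.span ℂ K) (hpos : IsPosEl x) : x ∈ coneOf K := by
  obtain ⟨r, hr0, htr⟩ : ∃ r : ℝ, 0 ≤ r ∧ trL x = r :=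
    ⟨_, (Complex.nonneg_iff.1 hpos.trL_nonneg).1,
      Complex.eq_re_of_ofReal_le (by rw [Complex.ofReal_zero]; exact hpos.trL_nonneg)⟩
  rcases hr0.eq_or_lt with rfl | hr
  · rw [hpos.eq_zero_of_trL_eq_zero (by rw [htr, Complex.ofReal_zero])]
    exact zero_mem_coneOf hne
  · have hy : r⁻¹ • x ∈ K := hsec ⟨Submodule.smul_of_tower_mem _ _ hx,
      hpos.real_smul (inv_nonneg.2 hr.le), by
        rw [trL_real_smul, htr, ← Complex.ofReal_mul, inv_mul_cancel₀ hr.ne', Complex.ofReal_one]⟩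
    exact ⟨r, r⁻¹ • x, hr.le, hy, by rw [smul_smul, mul_inv_cancel₀ hr.ne', one_smul]⟩

end Cone

theorem isSection_iff_cone_hereditary_general
    {ι : Type} [Fintype ι] [DecidableEq ι] {d : ι → Type}
    [∀ i, Fintype (d i)] [∀ i, DecidableEq (d i)]
    (K : Set (PiMat ι d)) (hK : K ⊆ stateSet ι d)
    (hconv : Convex ℝ K) :
    IsSection K ↔
      ∀ a b, a ∈ coneOf K → b ∈ coneOf K → IsPosEl (a - b) → a - b ∈ coneOf K := by
  rw [isSection_iff_span_inter_stateSet_subset hK]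
  constructor
  · rintro hsec a b ha hb hab
    have hne : K.Nonempty := let ⟨_, σ, _, hσ, _⟩ := ha; ⟨σ, hσ⟩
    exact mem_coneOf_of_span_inter_stateSet_subset hsec hne
      (sub_mem (coneOf_subset_span ha) (coneOf_subset_span hb)) hab
  · rintro hher x hx
    have hne := nonempty_of_mem_span_inter_stateSet hx
    obtain ⟨hx_span, hx_state⟩ := hx
    have hx_real : x ∈ Submodule.span ℝ K := mem_span_real_of_isSelfAdjoint
      (fun σ hσ => (hK hσ).1.isSelfAdjoint) hx_span hx_state.1.isSelfAdjoint
    obtain ⟨P, hP, N, hN, rfl⟩ := span_real_subset_coneOf_sub_coneOf hconv hne hx_real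
    exact coneOf_inter_stateSet_subset hK ⟨hher P N hP hN hx_state.1, hx_state⟩

/-- Let `K ⊆ S(A)` be a compact convex subset and
`Q = {λσ : λ ≥ 0, σ ∈ K}`. Then `K` is a section of `S(A)` iff
for all `a, b ∈ Q` with `b ≤ a` (i.e. `a - b ∈ A⁺`) one has `a - b ∈ Q`. -/
theorem isSection_iff_cone_hereditary
    {ι : Type} [Fintype ι] [DecidableEq ι] {d : ι → Type}
    [∀ i, Fintype (d i)] [∀ i, DecidableEq (d i)]
    (K : Set (PiMat ι d)) (hK : K ⊆ stateSet ι d)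
    (hconv : Convex ℝ K) (hcpt : IsCompact K) :
    IsSection K ↔
      ∀ a b, a ∈ coneOf K → b ∈ coneOf K → IsPosEl (a - b) → a - b ∈ coneOf K :=
  isSection_iff_cone_hereditary_general K hK hconv

end GenCh
end

section
/- Let A be a finite-dimensional C*-algebra, J ⊆ A a self-adjoint linear subspace, and suppose K = J ∩ S(A) is nonempty. Then there exists an orthogonal projection p ∈ A such that [K] = J ∩ pAp. In particular, if J contains a positive invertible element, then J = [K]. -/
open scoped BigOperators Pointwise

namespace GenCh

/-- The compression map `a ↦ p a p`; its range is the compressed algebra `pAp`. -/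
noncomputable def compress {ι : Type} [Fintype ι] [DecidableEq ι] {d : ι → Type}
    [∀ i, Fintype (d i)] [∀ i, DecidableEq (d i)]
    (p : PiMat ι d) : PiMat ι d →ₗ[ℂ] PiMat ι d :=
  (LinearMap.mulLeft ℂ p).comp (LinearMap.mulRight ℂ p)

/-!
View `A` as a C⋆-algebra (operator norm, Loewner order) and write `K = J ∩ S(A)`. Averaging a
finite subset of `K` that spans `[K]` gives a state `ρ ∈ K`; each element of the subset is
dominated by a multiple of `ρ`, so it lives in `pAp` for the support projection `p` of `ρ`, whence
`[K] ⊆ J ∩ pAp`. Conversely `ρ ≥ δ p` for some `δ > 0`, so for self-adjoint `a ∈ J ∩ pAp` of trace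
zero the element `ρ + ε a` lies again in `K` once `ε > 0` is small, and `a ∈ [K]`; a general
element of `J ∩ pAp` splits into real and imaginary parts, which stay in `J` since `J` is
self-adjoint. Finally, a positive invertible `ρ₀ ∈ J` normalises to an element of `K ⊆ pAp`,
which forces `p = 1`.
-/
theorem mul_mul_eq_self_of_mul_eq {A : Type*} [Mul A] [StarMul A] {p a : A}
    (hp : IsSelfAdjoint p) (ha : IsSelfAdjoint a) (hap : a * p = a) : p * a * p = a := by
  have hpa : p * a = a := by simpa [hp.star_eq, ha.star_eq] using congrArg star hap
  rw [hpa, hap]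

section Corner

variable {A : Type*} [Semiring A] [Algebra ℂ A]

/-- The compressed space `pAp`, for idempotent `p`. -/
def corner (p : A) : Submodule ℂ A where
  carrier := {a | p * a * p = a}
  add_mem' {a b} (ha : p * a * p = a) (hb : p * b * p = b) :=
    show p * (a + b) * p = a + b by rw [mul_add, add_mul, ha, hb]
  zero_mem' := show p * 0 * p = 0 by simp
  smul_mem' c a (ha : p * a * p = a) :=
    show p * (c • a) * p = c • a by rw [mul_smul_comm, smul_mul_assoc, ha]

theorem mem_corner {p a : A} : a ∈ corner p ↔ p * a * p = a := Iff.rfl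

theorem corner_one : corner (1 : A) = ⊤ := by
  ext a
  simp [mem_corner]

variable [StarRing A]

theorem star_mem_corner {p a : A} (hp : IsSelfAdjoint p) (ha : a ∈ corner p) :
    star a ∈ corner p := by
  rw [mem_corner] at ha ⊢
  simpa [mul_assoc, hp.star_eq] using congrArg star ha

end Corner

theorem realPart_mem {A : Type*} [AddCommGroup A] [Module ℂ A] [StarAddMonoid A]
    [StarModule ℂ A] {S : Submodule ℂ A} (hS : ∀ a ∈ S, star a ∈ S) {a : A} (ha : a ∈ S) :
    (realPart a : A) ∈ S := by
  rw [realPart_apply_coe]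
  exact S.smul_of_tower_mem _ (S.add_mem ha (hS a ha))

theorem imaginaryPart_mem {A : Type*} [AddCommGroup A] [Module ℂ A] [StarAddMonoid A]
    [StarModule ℂ A] {S : Submodule ℂ A} (hS : ∀ a ∈ S, star a ∈ S) {a : A} (ha : a ∈ S) :
    (imaginaryPart a : A) ∈ S := by
  rw [imaginaryPart_apply_coe]
  exact S.smul_mem _ (S.smul_of_tower_mem _ (S.sub_mem ha (hS a ha)))

theorem eq_one_of_isUnit_mem_corner {A : Type*} [Ring A] [Algebra ℂ A] {p ρ : A}
    (hp : IsIdempotentElem p) (hu : IsUnit ρ) (hρ : ρ ∈ corner p) : p = 1 := by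
  have h : ρ * (1 - p) = 0 := by
    rw [← mem_corner.mp hρ, mul_sub, mul_one, mul_assoc (p * ρ), hp.eq, sub_self]
  exact (sub_eq_zero.mp (hu.mul_right_eq_zero.mp h)).symm

theorem exists_pos_forall_le_of_finite {s : Set ℝ} (hs : s.Finite) (hpos : ∀ x ∈ s, 0 < x) :
    ∃ δ : ℝ, 0 < δ ∧ ∀ x ∈ s, δ ≤ x := by
  rcases s.eq_empty_or_nonempty with rfl | hne
  · exact ⟨1, one_pos, by simp⟩
  · obtain ⟨x₀, hx₀, hmin⟩ := s.exists_min_image id hs hne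
    exact ⟨x₀, hpos x₀ hx₀, hmin⟩

section CStarAlgebra

variable {A : Type*} [CStarAlgebra A] [PartialOrder A] [StarOrderedRing A]

/-- The support projection of `ρ` is `cfc (1_{x ≠ 0}) ρ`; finiteness of the spectrum makes this
indicator continuous on it and keeps the nonzero spectrum away from `0`. -/
theorem exists_isStarProjection_support {ρ : A} (hρ : 0 ≤ ρ) (hfin : (spectrum ℝ ρ).Finite) :
    ∃ p : A, IsStarProjection p ∧ ρ * p = ρ ∧ ∃ δ : ℝ, 0 < δ ∧ δ • p ≤ ρ := by
  obtain ⟨δ, hδ, hδle⟩ := exists_pos_forall_le_of_finite (hfin.subset Set.inter_subset_left)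
    fun x (hx : x ∈ spectrum ℝ ρ ∧ x ≠ 0) =>
      (spectrum_nonneg_of_nonneg hρ hx.1).lt_of_ne' hx.2
  set f : ℝ → ℝ := fun x => if x = 0 then 0 else 1
  have hf : ContinuousOn f (spectrum ℝ ρ) := hfin.continuousOn f
  refine ⟨cfc f ρ, ⟨?_, cfc_predicate f ρ⟩, ?_, δ, hδ, ?_⟩
  · rw [IsIdempotentElem, ← cfc_mul f f ρ]
    exact cfc_congr fun x _ => by by_cases hx : x = 0 <;> simp [f, hx]
  · have h : cfc (fun x => x * f x) ρ = cfc (fun x => x) ρ :=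
      cfc_congr fun x _ => by by_cases hx : x = 0 <;> simp [f, hx]
    rwa [cfc_mul (fun x => x) f ρ, cfc_id' ℝ ρ] at h
  · rw [← cfc_const_mul δ f ρ]
    conv_rhs => rw [← cfc_id' ℝ ρ]
    refine cfc_mono fun x hx => ?_
    by_cases hx0 : x = 0
    · simp [f, hx0]
    · simpa [f, hx0] using hδle x ⟨hx, hx0⟩

/-- Positivity forces `σ ≤ ρ` to vanish wherever `ρ` does: `(1-p)σ(1-p) = 0`, and in a
C⋆-algebra this gives `σ(1-p) = 0`. -/
theorem mul_eq_self_of_le {p ρ σ : A} (hp : IsStarProjection p) (hρp : ρ * p = ρ)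
    (hσ : 0 ≤ σ) (hσρ : σ ≤ ρ) : σ * p = σ := by
  set q := 1 - p
  have hq : star q = q := hp.one_sub.isSelfAdjoint.star_eq
  have hρq : ρ * q = 0 := by simp [q, mul_sub, hρp]
  have hqσq : star q * σ * q = 0 := by
    refine le_antisymm ?_ (star_left_conjugate_nonneg hσ q)
    simpa [mul_assoc, hρq] using star_left_conjugate_le_conjugate hσρ q
  obtain ⟨s, rfl⟩ := CStarAlgebra.nonneg_iff_eq_star_mul_self.mp hσ
  have hsq : s * q = 0 := by
    rw [← CStarRing.star_mul_self_eq_zero_iff, star_mul, ← hqσq]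
    noncomm_ring
  have h : star s * s * q = 0 := by rw [mul_assoc, hsq, mul_zero]
  simp only [q, mul_sub, mul_one, sub_eq_zero] at h
  exact h.symm

theorem neg_norm_smul_le_of_mem_corner {p a : A} (hp : IsStarProjection p) (ha : IsSelfAdjoint a)
    (hpa : a ∈ corner p) : -(‖a‖ • p) ≤ a := by
  have h := star_left_conjugate_le_conjugate ha.neg_algebraMap_norm_le_self p
  rwa [hp.isSelfAdjoint.star_eq, mem_corner.mp hpa, Algebra.algebraMap_eq_smul_one, mul_neg,
    neg_mul, mul_smul_comm, mul_one, smul_mul_assoc, hp.isIdempotentElem.eq] at h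

end CStarAlgebra

section States

open scoped ComplexOrder

/-- For `φ` the trace this is the state space `S(A)`. -/
def states {A : Type*} [AddCommMonoid A] [Module ℂ A] [LE A] (φ : A →ₗ[ℂ] ℂ) : Set A :=
  {σ | 0 ≤ σ ∧ φ σ = 1}

theorem ne_zero_of_mem_states {A : Type*} [AddCommMonoid A] [Module ℂ A] [LE A]
    {φ : A →ₗ[ℂ] ℂ} {σ : A} (hσ : σ ∈ states φ) : σ ≠ 0 := by
  rintro rfl
  simpa using hσ.2

variable {A : Type*} [CStarAlgebra A] [PartialOrder A] [StarOrderedRing A]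
  {φ : A →ₗ[ℂ] ℂ} {J : Submodule ℂ A}

theorem inv_card_smul_sum_mem_states {S : Finset A} (hS : S.Nonempty)
    (hSK : (S : Set A) ⊆ J ∩ states φ) :
    (S.card : ℝ)⁻¹ • ∑ σ ∈ S, σ ∈ (J : Set A) ∩ states φ := by
  have hcard : (S.card : ℂ) ≠ 0 := by exact_mod_cast hS.card_pos.ne'
  refine ⟨J.smul_of_tower_mem _ (J.sum_mem fun σ hσ => (hSK hσ).1),
    smul_nonneg (by positivity) (Finset.sum_nonneg fun σ hσ => (hSK hσ).2.1), ?_⟩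
  rw [LinearMap.map_smul_of_tower, map_sum, Finset.sum_congr rfl fun σ hσ => (hSK hσ).2.2]
  simp [hcard]

theorem mem_span_states_of_isSelfAdjoint (hφ : ∀ a, φ (star a) = star (φ a)) {ρ p : A}
    (hρ : ρ ∈ (J : Set A) ∩ states φ) (hp : IsStarProjection p) (hρp : ρ ∈ corner p) {δ : ℝ}
    (hδ : 0 < δ) (hδρ : δ • p ≤ ρ) {a : A} (haJ : a ∈ J) (hap : a ∈ corner p)
    (ha : IsSelfAdjoint a) : a ∈ Submodule.span ℂ ((J : Set A) ∩ states φ) := by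
  obtain ⟨t, ht⟩ : ∃ t : ℝ, φ a = t :=
    ⟨(φ a).re, (Complex.conj_eq_iff_re.mp ((hφ a).symm.trans (congrArg φ ha.star_eq))).symm⟩
  set b := a - t • ρ
  have hbJ : b ∈ J := J.sub_mem haJ (J.smul_of_tower_mem t hρ.1)
  have hbp : b ∈ corner p := (corner p).sub_mem hap ((corner p).smul_of_tower_mem t hρp)
  have hb : IsSelfAdjoint b := ha.sub ((IsSelfAdjoint.all t).smul hρ.2.1.isSelfAdjoint)
  have hφb : φ b = 0 := by simp [b, ht, hρ.2.2]
  set ε := δ / (‖b‖ + 1)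
  have hε : 0 < ε := by positivity
  have hεb : ε * ‖b‖ ≤ δ := by
    calc ε * ‖b‖ ≤ ε * (‖b‖ + 1) := by gcongr; linarith
      _ = δ := div_mul_cancel₀ δ (by positivity)
  set σ := ρ + ε • b
  have hσ : σ ∈ (J : Set A) ∩ states φ := by
    refine ⟨J.add_mem hρ.1 (J.smul_of_tower_mem ε hbJ), ?_, by simp [σ, hρ.2.2, hφb]⟩
    calc 0 ≤ (δ - ε * ‖b‖) • p := smul_nonneg (sub_nonneg.2 hεb) hp.nonneg
      _ = δ • p + ε • -(‖b‖ • p) := by rw [smul_neg, smul_smul, sub_smul, sub_eq_add_neg]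
      _ ≤ σ := add_le_add hδρ
          (smul_le_smul_of_nonneg_left (neg_norm_smul_le_of_mem_corner hp hb hbp) hε.le)
  have hab : a = ε⁻¹ • (σ - ρ) + t • ρ := by simp [σ, b, hε.ne']
  rw [hab]
  exact add_mem (Submodule.smul_of_tower_mem _ _ (sub_mem (Submodule.subset_span hσ)
    (Submodule.subset_span hρ))) (Submodule.smul_of_tower_mem _ _ (Submodule.subset_span hρ))

theorem mem_span_states_of_mem_corner (hφ : ∀ a, φ (star a) = star (φ a))
    (hJ : ∀ a ∈ J, star a ∈ J) {ρ p : A} (hρ : ρ ∈ (J : Set A) ∩ states φ)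
    (hp : IsStarProjection p) (hρp : ρ ∈ corner p) {δ : ℝ} (hδ : 0 < δ) (hδρ : δ • p ≤ ρ)
    {a : A} (ha : a ∈ J ⊓ corner p) : a ∈ Submodule.span ℂ ((J : Set A) ∩ states φ) := by
  have hstar : ∀ b ∈ J ⊓ corner p, star b ∈ J ⊓ corner p :=
    fun b hb => ⟨hJ b hb.1, star_mem_corner hp.isSelfAdjoint hb.2⟩
  have hsa : ∀ b ∈ J ⊓ corner p, IsSelfAdjoint b →
      b ∈ Submodule.span ℂ ((J : Set A) ∩ states φ) :=
    fun b hb => mem_span_states_of_isSelfAdjoint hφ hρ hp hρp hδ hδρ hb.1 hb.2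
  rw [← realPart_add_I_smul_imaginaryPart a]
  exact add_mem (hsa _ (realPart_mem hstar ha) (realPart a).2)
    (Submodule.smul_mem _ _ (hsa _ (imaginaryPart_mem hstar ha) (imaginaryPart a).2))

theorem exists_isStarProjection_span_states_eq [FiniteDimensional ℂ A]
    (hfin : ∀ a : A, (spectrum ℝ a).Finite) (hφ : ∀ a, φ (star a) = star (φ a))
    (hJ : ∀ a ∈ J, star a ∈ J) (hne : ((J : Set A) ∩ states φ).Nonempty) :
    ∃ p : A, IsStarProjection p ∧
      Submodule.span ℂ ((J : Set A) ∩ states φ) = J ⊓ corner p := by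
  obtain ⟨S, hSK, hS⟩ := (Submodule.fg_span_iff_fg_span_finset_subset _).mp
    (IsNoetherian.noetherian (Submodule.span ℂ ((J : Set A) ∩ states φ)))
  have hSne : S.Nonempty := by
    obtain ⟨σ, hσ⟩ := hne
    rw [Finset.nonempty_iff_ne_empty]
    rintro rfl
    have h : σ ∈ Submodule.span ℂ ((J : Set A) ∩ states φ) := Submodule.subset_span hσ
    rw [hS, Finset.coe_empty, Submodule.span_empty, Submodule.mem_bot] at h
    exact ne_zero_of_mem_states hσ.2 h
  have hS0 : ∀ σ ∈ S, 0 ≤ σ := fun σ hσ => (hSK hσ).2.1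
  obtain ⟨p, hp, hsump, δ, hδ, hδp⟩ :=
    exists_isStarProjection_support (Finset.sum_nonneg hS0) (hfin _)
  have hρ := inv_card_smul_sum_mem_states hSne hSK
  have hρp : (S.card : ℝ)⁻¹ • ∑ σ ∈ S, σ ∈ corner p :=
    mul_mul_eq_self_of_mul_eq hp.isSelfAdjoint hρ.2.1.isSelfAdjoint
      (by rw [smul_mul_assoc, hsump])
  have hδρ : ((S.card : ℝ)⁻¹ * δ) • p ≤ (S.card : ℝ)⁻¹ • ∑ σ ∈ S, σ := by
    rw [mul_smul]
    exact smul_le_smul_of_nonneg_left hδp (by positivity)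
  refine ⟨p, hp, le_antisymm ?_ fun a ha =>
    mem_span_states_of_mem_corner hφ hJ hρ hp hρp (by positivity) hδρ ha⟩
  rw [hS, Submodule.span_le]
  intro σ hσ
  exact ⟨(hSK hσ).1, mul_mul_eq_self_of_mul_eq hp.isSelfAdjoint (hS0 σ hσ).isSelfAdjoint
    (mul_eq_self_of_le hp hsump (hS0 σ hσ) (Finset.single_le_sum hS0 hσ))⟩

theorem mem_span_states_of_nonneg {ρ : A} (hφρ : 0 < φ ρ) (hρJ : ρ ∈ J) (hρ : 0 ≤ ρ) :
    ρ ∈ Submodule.span ℂ ((J : Set A) ∩ states φ) := by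
  have hρ' : (φ ρ)⁻¹ • ρ ∈ (J : Set A) ∩ states φ :=
    ⟨J.smul_mem _ hρJ, smul_nonneg (inv_nonneg.2 hφρ.le) hρ, by simp [hφρ.ne']⟩
  simpa [smul_smul, hφρ.ne'] using
    (Submodule.span ℂ _).smul_mem (φ ρ) (Submodule.subset_span hρ')

theorem span_states_eq_of_isUnit [Nontrivial A] (hφpos : ∀ a : A, 0 ≤ a → a ≠ 0 → 0 < φ a)
    {p : A} (hp : IsIdempotentElem p)
    (hspan : Submodule.span ℂ ((J : Set A) ∩ states φ) = J ⊓ corner p) {ρ : A} (hρJ : ρ ∈ J)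
    (hρ : 0 ≤ ρ) (hu : IsUnit ρ) : Submodule.span ℂ ((J : Set A) ∩ states φ) = J := by
  have hρp : ρ ∈ J ⊓ corner p := hspan ▸ mem_span_states_of_nonneg (hφpos ρ hρ hu.ne_zero) hρJ hρ
  rw [hspan, eq_one_of_isUnit_mem_corner hp hu hρp.2, corner_one, inf_top_eq]

end States

section PiMat

open scoped MatrixOrder Matrix.Norms.L2Operator ComplexOrder

variable {ι : Type} [Fintype ι] {d : ι → Type} [∀ i, Fintype (d i)]

theorem isPosEl_iff_nonneg [∀ i, DecidableEq (d i)] {a : PiMat ι d} : IsPosEl a ↔ 0 ≤ a :=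
  CStarAlgebra.nonneg_iff_eq_star_mul_self.symm

theorem stateSet_eq_states [DecidableEq ι] [∀ i, DecidableEq (d i)] :
    stateSet ι d = states trL := by
  ext a
  simp only [stateSet, states, isPosEl_iff_nonneg]

theorem trL_star (a : PiMat ι d) : trL (star a) = star (trL a) := by
  simp [trL, Matrix.star_eq_conjTranspose, Matrix.trace_conjTranspose]

theorem trL_pos {a : PiMat ι d} (ha : 0 ≤ a) (ha0 : a ≠ 0) : 0 < trL a := by
  have hpsd : ∀ i, (a i).PosSemidef := fun i => Matrix.nonneg_iff_posSemidef.mp (ha i)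
  obtain ⟨i, hi⟩ : ∃ i, a i ≠ 0 := by
    by_contra! h
    exact ha0 (funext h)
  exact Finset.sum_pos' (fun i _ => (hpsd i).trace_nonneg)
    ⟨i, Finset.mem_univ i,
      (hpsd i).trace_nonneg.lt_of_ne' (mt (hpsd i).trace_eq_zero_iff.mp hi)⟩

theorem finite_spectrum_real [∀ i, DecidableEq (d i)] (a : PiMat ι d) :
    (spectrum ℝ a).Finite := by
  rw [Pi.spectrum_eq]
  exact Set.finite_iUnion fun i => Matrix.finite_real_spectrum

theorem range_compress [DecidableEq ι] [∀ i, DecidableEq (d i)] {p : PiMat ι d}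
    (hp : IsIdempotentElem p) :
    LinearMap.range (compress p) = corner p := by
  ext a
  simp only [LinearMap.mem_range, compress, LinearMap.comp_apply, LinearMap.mulRight_apply,
    LinearMap.mulLeft_apply, mem_corner]
  constructor
  · rintro ⟨b, rfl⟩
    rw [← mul_assoc, ← mul_assoc, hp.eq, mul_assoc, hp.eq, mul_assoc]
  · intro h
    exact ⟨a, by rw [← mul_assoc, h]⟩

end PiMat

/-- Let `J ⊆ A` be a self-adjoint subspace with
`K = J ∩ S(A)` nonempty. Then there is an orthogonal projection `p ∈ A` such that
`[K] = J ∩ pAp`. In particular, if `J` contains a positive invertible element,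
then `J = [K]`. -/
theorem span_of_selfAdjoint_section
    {ι : Type} [Fintype ι] [DecidableEq ι] {d : ι → Type}
    [∀ i, Fintype (d i)] [∀ i, DecidableEq (d i)]
    (J : Submodule ℂ (PiMat ι d))
    (hsa : ∀ a ∈ J, star a ∈ J)
    (hne : ((J : Set (PiMat ι d)) ∩ stateSet ι d).Nonempty) :
    (∃ p : PiMat ι d, IsSelfAdjoint p ∧ p * p = p ∧
        Submodule.span ℂ ((J : Set (PiMat ι d)) ∩ stateSet ι d) =
          J ⊓ LinearMap.range (compress p)) ∧
      ((∃ ρ ∈ J, IsPosEl ρ ∧ IsUnit ρ) →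
        Submodule.span ℂ ((J : Set (PiMat ι d)) ∩ stateSet ι d) = J) := by
  rw [stateSet_eq_states] at hne ⊢
  open scoped MatrixOrder Matrix.Norms.L2Operator in
  obtain ⟨p, hp, hspan⟩ :=
    exists_isStarProjection_span_states_eq (A := PiMat ι d) finite_spectrum_real trL_star hsa hne
  refine ⟨⟨p, hp.isSelfAdjoint, hp.isIdempotentElem, ?_⟩, ?_⟩
  · rw [hspan, range_compress hp.isIdempotentElem]
  rintro ⟨ρ, hρJ, hρ, hu⟩
  have : Nontrivial (PiMat ι d) := nontrivial_of_ne _ _ (ne_zero_of_mem_states hne.some_mem.2)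
  open scoped MatrixOrder Matrix.Norms.L2Operator in
  exact span_states_eq_of_isUnit (fun a => trL_pos) hp.isIdempotentElem hspan hρJ
    (isPosEl_iff_nonneg.mp hρ) hu

end GenCh
end
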